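/- For a nonzero ordinal γ and nonzero finite m, the ordinal ω^γ·(m+1) is not homeomorphic to any subspace of ω^γ·m + 1; hence ω^γ·(m+1) and ω^γ·m + 1 are not biembeddable. -/

import Mathlib

open Set Ordinal
open scoped Cardinal

namespace Ordinal

universe u

/-- Natural (Hessenberg) addition, as defined in Mathlib (December 2024), where it has since been removed. -/
noncomputable def nadd : Ordinal.{u} → Ordinal.{u} → Ordinal.{u}
  | a, b =>
    max (blsub.{u, u} a fun a' _ => nadd a' b) (blsub.{u, u} b fun b' _ => nadd a b')
termination_by o₁ o₂ => (o₁, o₂)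

end Ordinal

infixl:65 " ♯ " => Ordinal.nadd

noncomputable section

/-- Derived set (non-isolated points) of a set of ordinals, as a subspace. -/
def deriv' (s : Set Ordinal.{0}) : Set Ordinal.{0} := {x ∈ s | x ∈ closure (s \ {x})}

/-- Iterated Cantor–Bendixson derivative. -/
def iterDeriv (s : Set Ordinal.{0}) (o : Ordinal.{0}) : Set Ordinal.{0} :=
  Ordinal.limitRecOn o s (fun _ ih => deriv' ih) (fun o _ ih => ⋂ (p : Ordinal.{0}) (h : p < o), ih p h)

/-- `s` contains a homeomorphic copy of the ordinal `α` (with its order topology). -/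
def HomeoCopy (α : Ordinal.{0}) (s : Set Ordinal.{0}) : Prop :=
  ∃ t : Set Ordinal, t ⊆ s ∧ Nonempty ((Iio α : Set Ordinal.{0}) ≃ₜ t)

/-- Two ordinals are biembeddable: each is homeomorphic to a subspace of the other. -/
def Biembed (α β : Ordinal.{0}) : Prop := HomeoCopy α (Iio β) ∧ HomeoCopy β (Iio α)

/-- Two sets of ordinals are order-homeomorphic: there is an order-preserving homeomorphism. -/
def OrderHomeo (X Y : Set Ordinal.{0}) : Prop :=
  ∃ e : X ≃ₜ Y, ∀ a b : X, a ≤ b ↔ e a ≤ e b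

/-- An ordinal is order-reinforcing. -/
def OrderReinforcing (α : Ordinal.{0}) : Prop :=
  ∀ X : Set Ordinal, Nonempty ((Iio α : Set Ordinal.{0}) ≃ₜ X) → ∃ Y ⊆ X, OrderHomeo (Iio α) Y

/-- The Cantor–Bendixson rank of an ordinal: the least exponent in its Cantor normal form. -/
def CB (x : Ordinal.{0}) : Ordinal := if x = 0 then 0 else sSup {γ | (ω : Ordinal.{0}) ^ γ ∣ x}

/-- The natural (Hessenberg) sum of a finite family of ordinals. -/
def natSumFam {k : ℕ} (α : Fin k → Ordinal.{0}) : Ordinal := (List.ofFn α).foldr (· ♯ ·) 0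

/-- The Milner–Rado sum of a finite family of ordinals. -/
def mrSumFam {k : ℕ} (α : Fin k → Ordinal.{0}) : Ordinal :=
  sInf {δ | ∀ β : Fin k → Ordinal, (∀ i, β i < α i) → δ ≠ natSumFam β}

/-- The topological pigeonhole relation `β → (top α i)¹` for finitely many colours. -/
def TopPH {k : ℕ} (β : Ordinal.{0}) (α : Fin k → Ordinal.{0}) : Prop :=
  ∀ c : Ordinal → Fin k, ∃ i, HomeoCopy (α i) (Iio β ∩ c ⁻¹' {i})

/-- The topological pigeonhole relation with an arbitrary index type of colours. -/
def TopPHFam {ι : Type*} (β : Ordinal.{0}) (α : ι → Ordinal.{0}) : Prop :=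
  ∀ c : Ordinal → ι, ∃ i, HomeoCopy (α i) (Iio β ∩ c ⁻¹' {i})

/-- `ω̄[γ, m]`: `ω ^ γ * m + 1` if `γ > 0`, and `m` if `γ = 0`. -/
def obar (γ : Ordinal.{0}) (m : ℕ) : Ordinal := if γ = 0 then (m : Ordinal.{0}) else ω ^ γ * m + 1

/-- `C` is closed and unbounded in `o`. -/
def IsClubIn (C : Set Ordinal.{0}) (o : Ordinal.{0}) : Prop :=
  C ⊆ Iio o ∧ (∀ x < o, ∃ y ∈ C, x ≤ y) ∧
    ∀ x < o, x ≠ 0 → (∀ y < x, ∃ z ∈ C, y < z ∧ z < x) → x ∈ C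

/-- `S` is stationary in `o`: it meets every club subset of `o`. -/
def StationaryIn (S : Set Ordinal.{0}) (o : Ordinal.{0}) : Prop :=
  ∀ C, IsClubIn C o → (S ∩ C).Nonempty

/-!
For `δ ≠ 0` the `δ`-th Cantor–Bendixson derivative of `[0, μ)` consists of the nonzero multiples
of `ω ^ δ` below `μ`. Hence `ω ^ γ * (m + 1)` and `ω ^ γ * m + 1` have the same finite `γ`-th
derivative `{ω ^ γ * k | 1 ≤ k ≤ m}`. Derivatives commute with embeddings, so counting shows that a
copy `X ⊆ ω ^ γ * m + 1` of `ω ^ γ * (m + 1)` has this same `γ`-th derivative. The copy `Z ⊆ X` of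
the last block `(ω ^ γ * m, ω ^ γ * (m + 1))` is closed in `X`, misses `X^(γ)`, and has infinite
`δ`-th derivatives for all `δ < γ`. By compactness the closure of `Z` then has a point `z` in its
`γ`-th derivative; `z` lies in `[0, ω ^ γ * m]^(γ) = X^(γ) ⊆ X`, hence in `Z`: a contradiction.
-/
open CantorBendixson Topology
open scoped Filter

universe u

section CantorBendixson

variable {X E : Type u} [TopologicalSpace X] [TopologicalSpace E]

theorem CantorBendixson.iteratedDerivedSet_subset (s : Set X) (a : Ordinal) : sᵈ[a] ⊆ s :=
  (iteratedDerivedSet_antitone s zero_le).trans_eq iteratedDerivedSet_zero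

theorem Topology.IsEmbedding.accPt_image_iff {f : X → E} (hf : IsEmbedding f) {s : Set X}
    {x : X} : AccPt (f x) (𝓟 (f '' s)) ↔ AccPt x (𝓟 s) := by
  rw [accPt_principal_iff_clusterPt, accPt_principal_iff_clusterPt, ← mem_closure_iff_clusterPt,
    ← mem_closure_iff_clusterPt, hf.isInducing.closure_eq_preimage_closure_image, mem_preimage,
    image_sdiff hf.injective, image_singleton]

theorem Topology.IsEmbedding.image_relDerivedSet {f : X → E} (hf : IsEmbedding f) (s : Set X) :
    f '' relDerivedSet s = relDerivedSet (f '' s) := by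
  ext y
  constructor
  · rintro ⟨x, ⟨hacc, hxs⟩, rfl⟩
    exact ⟨hf.accPt_image_iff.mpr hacc, mem_image_of_mem f hxs⟩
  · rintro ⟨hacc, x, hxs, rfl⟩
    exact ⟨x, ⟨hf.accPt_image_iff.mp hacc, hxs⟩, rfl⟩

theorem Topology.IsEmbedding.image_iteratedDerivedSet {f : X → E} (hf : IsEmbedding f)
    (s : Set X) (a : Ordinal) : f '' sᵈ[a] = (f '' s)ᵈ[a] := by
  induction a using Ordinal.limitRecOn with
  | zero => simp only [iteratedDerivedSet_zero]
  | add_one a ih =>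
    rw [iteratedDerivedSet_succ, iteratedDerivedSet_succ, hf.image_relDerivedSet, ih]
  | limit a ha ih =>
    have : Nonempty (Iio a) := ⟨⟨0, ha.bot_lt⟩⟩
    rw [iteratedDerivedSet_limit ha, iteratedDerivedSet_limit ha,
      hf.injective.injOn.image_iInter_eq]
    exact iInter_congr fun b => ih b b.2

theorem CantorBendixson.relDerivedSet_inter_isOpen {s U : Set X} (hU : IsOpen U) :
    relDerivedSet (s ∩ U) = relDerivedSet s ∩ U := by
  ext x
  simp only [relDerivedSet_apply, mem_inter_iff, mem_derivedSet]
  constructor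
  · rintro ⟨hacc, hxs, hxU⟩
    exact ⟨⟨hacc.mono (Filter.principal_mono.mpr inter_subset_left), hxs⟩, hxU⟩
  · rintro ⟨⟨hacc, hxs⟩, hxU⟩
    exact ⟨inter_comm U s ▸ hacc.nhds_inter (hU.mem_nhds hxU), hxs, hxU⟩

theorem CantorBendixson.iteratedDerivedSet_inter_isOpen {s U : Set X} (hU : IsOpen U)
    (a : Ordinal) : (s ∩ U)ᵈ[a] = sᵈ[a] ∩ U := by
  induction a using Ordinal.limitRecOn with
  | zero => simp only [iteratedDerivedSet_zero]
  | add_one a ih =>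
    rw [iteratedDerivedSet_succ, iteratedDerivedSet_succ, ih, relDerivedSet_inter_isOpen hU]
  | limit a ha ih =>
    have : Nonempty (Iio a) := ⟨⟨0, ha.bot_lt⟩⟩
    rw [iteratedDerivedSet_limit ha, iteratedDerivedSet_limit ha, iInter_inter]
    exact iInter_congr fun b => ih b b.2

theorem CantorBendixson.iteratedDerivedSet_nonempty {s : Set X} (hsc : IsCompact s)
    (hs : IsClosed s) {a : Ordinal} (ha : a ≠ 0) (h : ∀ b < a, (sᵈ[b]).Infinite) :
    (sᵈ[a]).Nonempty := by
  have hcompact b : IsCompact (sᵈ[b]) :=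
    hsc.of_isClosed_subset (isClosed_iteratedDerivedSet hs b) (iteratedDerivedSet_subset s b)
  rcases Ordinal.zero_or_succ_or_isSuccLimit a with rfl | ⟨b, rfl⟩ | hlim
  · exact absurd rfl ha
  · obtain ⟨x, hx, hacc⟩ :=
      (h b (Order.lt_succ b)).exists_accPt_of_subset_isCompact (hcompact b) subset_rfl
    rw [Order.succ_eq_add_one, iteratedDerivedSet_succ]
    exact ⟨x, hacc, hx⟩
  · have : Nonempty (Iio a) := ⟨⟨0, hlim.bot_lt⟩⟩
    rw [iteratedDerivedSet_limit hlim]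
    exact IsCompact.nonempty_iInter_of_directed_nonempty_isCompact_isClosed _
      ((iteratedDerivedSet_antitone s).comp_monotone (Subtype.mono_coe _)).directed_ge
      (fun b => (h b b.2).nonempty) (fun b => hcompact b)
      (fun b => isClosed_iteratedDerivedSet hs b)

theorem Topology.IsEmbedding.iteratedDerivedSet_range_eq {f g : X → E} (hf : IsEmbedding f)
    (hg : IsEmbedding g) {K : Set E} (hfK : range f ⊆ K) {a : Ordinal}
    (hK : Kᵈ[a] = (range g)ᵈ[a]) (hfin : (Kᵈ[a]).Finite) : (range f)ᵈ[a] = Kᵈ[a] := by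
  refine eq_of_subset_of_ncard_le (iteratedDerivedSet_mono hfK a) ?_ hfin
  rw [hK, ← image_univ, ← image_univ, ← hf.image_iteratedDerivedSet,
    ← hg.image_iteratedDerivedSet, ncard_image_of_injective _ hf.injective,
    ncard_image_of_injective _ hg.injective]

theorem Topology.IsEmbedding.exists_finite_iteratedDerivedSet [T2Space E] {f : X → E}
    (hf : IsEmbedding f) {K : Set E} (hK : IsCompact K) (hfK : range f ⊆ K) {a : Ordinal}
    (ha : a ≠ 0) (hKf : Kᵈ[a] ⊆ (range f)ᵈ[a]) {T : Set X} (hT : IsClosed T)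
    (hTa : Disjoint T (univ : Set X)ᵈ[a]) : ∃ b < a, (Tᵈ[b]).Finite := by
  by_contra! hinf
  have hZK : closure (f '' T) ⊆ K :=
    closure_minimal ((image_subset_range f T).trans hfK) hK.isClosed
  obtain ⟨z, hz⟩ := iteratedDerivedSet_nonempty (hK.of_isClosed_subset isClosed_closure hZK)
    isClosed_closure ha fun b hb => by
      have hZb := (hinf b hb).image hf.injective.injOn
      rw [hf.image_iteratedDerivedSet] at hZb
      exact hZb.mono (iteratedDerivedSet_mono subset_closure b)
  obtain ⟨x, hx, rfl⟩ : z ∈ f '' (univ : Set X)ᵈ[a] := by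
    rw [hf.image_iteratedDerivedSet, image_univ]
    exact hKf (iteratedDerivedSet_mono hZK a hz)
  have hxT : x ∈ T := by
    rw [← hT.closure_eq, hf.isInducing.closure_eq_preimage_closure_image]
    exact iteratedDerivedSet_subset (closure (f '' T)) a hz
  exact disjoint_left.mp hTa hxT hx

end CantorBendixson

namespace Ordinal

theorem forall_lt_mul_exists_dvd_iff {a c : Ordinal.{u}} (ha : a ≠ 0) :
    (∀ b < a * c, ∃ y, a ∣ y ∧ b < y ∧ y < a * c) ↔ Order.IsSuccPrelimit c := by
  have ha' : 0 < a := pos_iff_ne_zero.2 ha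
  constructor
  · intro h d hdc
    obtain ⟨y, ⟨e, rfl⟩, hdy, hyc⟩ := h (a * d) ((mul_lt_mul_iff_right₀ ha').2 hdc.lt)
    exact hdc.2 ((mul_lt_mul_iff_right₀ ha').1 hdy) ((mul_lt_mul_iff_right₀ ha').1 hyc)
  · intro hc b hb
    exact ⟨a * Order.succ (b / a), dvd_mul_right _ _, lt_mul_succ_div b ha,
      (mul_lt_mul_iff_right₀ ha').2 (hc.succ_lt ((lt_mul_iff_div_lt ha).1 hb))⟩

theorem opow_dvd_of_isSuccLimit {b x δ : Ordinal.{u}} (hb : b ≠ 0) (hδ : Order.IsSuccLimit δ)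
    (h : ∀ p < δ, b ^ p ∣ x) : b ^ δ ∣ x := by
  obtain ⟨p, hp, hmod⟩ := (lt_opow_of_isSuccLimit hb hδ).1 (mod_lt x (opow_ne_zero δ hb))
  have hdvd : b ^ p ∣ x % b ^ δ := (dvd_add_iff ((opow_dvd_opow b hp.le).mul_right _)).1
    (div_add_mod x (b ^ δ) ▸ h p hp)
  rw [dvd_iff_mod_eq_zero]
  by_contra h0
  exact (le_of_dvd h0 hdvd).not_gt hmod

def opowMultiplesBelow (μ δ : Ordinal.{u}) : Set Ordinal.{u} :=
  {x | x < μ ∧ x ≠ 0 ∧ ω ^ δ ∣ x}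

theorem relDerivedSet_eq_opowMultiplesBelow_add_one {μ δ : Ordinal.{u}} {s : Set Ordinal.{u}}
    (h₁ : opowMultiplesBelow μ δ ⊆ s) (h₂ : s ⊆ insert 0 (opowMultiplesBelow μ δ)) :
    relDerivedSet s = opowMultiplesBelow μ (δ + 1) := by
  have hne : ω ^ δ ≠ 0 := opow_ne_zero δ omega0_ne_zero
  ext x
  simp only [relDerivedSet_apply, mem_inter_iff, mem_derivedSet, SuccOrder.accPt_principal,
    isMin_iff_eq_bot, bot_eq_zero', opowMultiplesBelow, opow_add_one]
  constructor
  · rintro ⟨⟨hx0, hacc⟩, hxs⟩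
    obtain ⟨hxμ, -, c, rfl⟩ := (h₂ hxs).resolve_left hx0
    have hc : Order.IsSuccPrelimit c := (forall_lt_mul_exists_dvd_iff hne).1 fun b hb => by
      obtain ⟨y, hys, hby, hyx⟩ := hacc b hb
      exact ⟨y, ((h₂ hys).resolve_left (pos_of_gt hby).ne').2.2, hby, hyx⟩
    exact ⟨hxμ, hx0, mul_dvd_mul_left _ (isSuccPrelimit_iff_omega0_dvd.1 hc)⟩
  · rintro ⟨hxμ, hx0, d, rfl⟩
    rw [mul_assoc] at hxμ hx0 ⊢
    have hlim := (forall_lt_mul_exists_dvd_iff hne).2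
      (isSuccPrelimit_iff_omega0_dvd.2 (dvd_mul_right ω d))
    refine ⟨⟨hx0, fun b hb => ?_⟩, h₁ ⟨hxμ, hx0, dvd_mul_right _ _⟩⟩
    obtain ⟨y, hyd, hby, hyx⟩ := hlim b hb
    exact ⟨y, h₁ ⟨hyx.trans hxμ, (pos_of_gt hby).ne', hyd⟩, hby, hyx⟩

-- A set of ordinals in `Ordinal.{u}` is a set in `Type (u + 1)`, so its derivatives are indexed
-- by `Ordinal.{u + 1}`.
theorem iteratedDerivedSet_Iio {μ δ : Ordinal.{u}} (hδ : δ ≠ 0) :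
    (Iio μ)ᵈ[lift.{u + 1} δ] = opowMultiplesBelow μ δ := by
  induction δ using limitRecOn with
  | zero => exact absurd rfl hδ
  | add_one δ ih =>
    rw [lift_add_one, iteratedDerivedSet_succ]
    rcases eq_or_ne δ 0 with rfl | hδ0
    · rw [lift_zero, iteratedDerivedSet_zero]
      refine relDerivedSet_eq_opowMultiplesBelow_add_one (fun x hx => hx.1) fun x hx => ?_
      rcases eq_or_ne x 0 with rfl | hx0
      exacts [mem_insert _ _, Or.inr ⟨hx, hx0, by simp⟩]
    · rw [ih hδ0]
      exact relDerivedSet_eq_opowMultiplesBelow_add_one subset_rfl (subset_insert _ _)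
  | limit δ hlim ih =>
    ext x
    rw [iteratedDerivedSet_limit (isSuccLimit_lift.2 hlim), mem_iInter]
    constructor
    · intro h
      have h' p (hp : p < δ) : x ∈ (Iio μ)ᵈ[lift.{u + 1} p] := h ⟨lift p, lift_lt.2 hp⟩
      have h1 := one_lt_of_isSuccLimit hlim
      have hx1 : x ∈ opowMultiplesBelow μ 1 := ih 1 h1 one_ne_zero ▸ h' 1 h1
      refine ⟨hx1.1, hx1.2.1, opow_dvd_of_isSuccLimit omega0_ne_zero hlim fun p hp => ?_⟩
      rcases eq_or_ne p 0 with rfl | hp0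
      · simp
      · exact (ih p hp hp0 ▸ h' p hp).2.2
    · rintro hx ⟨b, hb⟩
      obtain ⟨p, hp, rfl⟩ := lt_lift_iff.1 hb
      rcases eq_or_ne p 0 with rfl | hp0
      · simpa using hx.1
      · rw [ih p hp hp0]
        exact ⟨hx.1, hx.2.1, (opow_dvd_opow ω hp.le).trans hx.2.2⟩

theorem opowMultiplesBelow_subset_iteratedDerivedSet_Iio (μ δ : Ordinal.{u}) :
    opowMultiplesBelow μ δ ⊆ (Iio μ)ᵈ[lift.{u + 1} δ] := by
  rcases eq_or_ne δ 0 with rfl | hδ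
  · rw [lift_zero, iteratedDerivedSet_zero]
    exact fun x hx => hx.1
  · exact (iteratedDerivedSet_Iio hδ).ge

theorem opowMultiplesBelow_mul_add_one (γ c : Ordinal.{u}) :
    opowMultiplesBelow (ω ^ γ * c + 1) γ = opowMultiplesBelow (ω ^ γ * (c + 1)) γ := by
  have hpos : 0 < ω ^ γ := opow_pos γ omega0_pos
  ext x
  simp only [opowMultiplesBelow, mem_ofPred_eq, and_congr_left_iff]
  rintro ⟨-, d, rfl⟩
  rw [Order.lt_add_one_iff, mul_le_mul_iff_right₀ hpos, mul_lt_mul_iff_right₀ hpos,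
    Order.lt_add_one_iff]

theorem finite_opowMultiplesBelow_mul_natCast (γ : Ordinal.{u}) (n : ℕ) :
    (opowMultiplesBelow (ω ^ γ * n) γ).Finite := by
  have hpos : 0 < ω ^ γ := opow_pos γ omega0_pos
  refine ((finite_Iio n).image fun k : ℕ => ω ^ γ * k).subset ?_
  rintro x ⟨hx, -, c, rfl⟩
  rw [mul_lt_mul_iff_right₀ hpos] at hx
  obtain ⟨k, rfl⟩ := lt_omega0.1 (hx.trans (natCast_lt_omega0 n))
  exact ⟨k, by exact_mod_cast hx, rfl⟩

theorem infinite_iteratedDerivedSet_Iio_add_inter_Ioi {β γ δ : Ordinal.{u}} (hδγ : δ < γ)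
    (hβ : ω ^ δ ∣ β) : ((Iio (β + ω ^ γ) ∩ Ioi β)ᵈ[lift.{u + 1} δ]).Infinite := by
  have hpos : 0 < ω ^ δ := opow_pos δ omega0_pos
  rw [iteratedDerivedSet_inter_isOpen isOpen_Ioi]
  refine Infinite.mono
    (inter_subset_inter_left _ (opowMultiplesBelow_subset_iteratedDerivedSet_Iio _ _)) ?_
  have hmono : StrictMono fun k : ℕ => β + ω ^ δ * ↑(k + 1) := fun k l hkl => by
    simpa [mul_lt_mul_iff_right₀ hpos] using hkl
  refine infinite_of_injective_forall_mem hmono.injective fun k => ?_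
  have hk : ω ^ δ * ↑(k + 1) < ω ^ γ := calc
    ω ^ δ * ↑(k + 1) < ω ^ δ * ω := (mul_lt_mul_iff_right₀ hpos).2 (natCast_lt_omega0 _)
    _ = ω ^ (δ + 1) := (opow_add_one ω δ).symm
    _ ≤ ω ^ γ := opow_le_opow_right omega0_pos (Order.add_one_le_of_lt hδγ)
  have hβk : β < β + ω ^ δ * ↑(k + 1) := lt_add_of_pos_right β (mul_pos hpos (by simp))
  exact ⟨⟨(add_lt_add_iff_left β).2 hk, (pos_of_gt hβk).ne', dvd_add hβ (dvd_mul_right _ _)⟩,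
    hβk⟩

end Ordinal

theorem not_homeoCopy_opow_mul_natCast_add_one {γ : Ordinal.{0}} (hγ : γ ≠ 0) (n : ℕ) :
    ¬ HomeoCopy (ω ^ γ * (n + 1)) (Iio (ω ^ γ * n + 1)) := by
  rintro ⟨t, ht, ⟨e⟩⟩
  set β := ω ^ γ * (n : Ordinal)
  set α := ω ^ γ * ((n : Ordinal) + 1)
  have hαβ : α = β + ω ^ γ := mul_add_one _ _
  have hf : IsEmbedding (Subtype.val ∘ e) := IsEmbedding.subtypeVal.comp e.isEmbedding
  have hft : range (Subtype.val ∘ e) ⊆ Iio (β + 1) := by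
    rintro _ ⟨x, rfl⟩
    exact ht (e x).2
  have hK : IsCompact (Iio (β + 1)) := by
    rw [Iio_add_one_eq_Iic, ← Icc_bot]
    exact isCompact_Icc
  have hKα : (Iio (β + 1))ᵈ[lift γ] = (Iio α)ᵈ[lift γ] := by
    rw [iteratedDerivedSet_Iio hγ, iteratedDerivedSet_Iio hγ, opowMultiplesBelow_mul_add_one]
  have hfin : ((Iio (β + 1))ᵈ[lift γ]).Finite := by
    rw [hKα, iteratedDerivedSet_Iio hγ]
    simpa [α] using finite_opowMultiplesBelow_mul_natCast γ (n + 1)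
  have hdisj :
      Disjoint (Subtype.val ⁻¹' Ioi β : Set (Iio α)) (univ : Set (Iio α))ᵈ[lift γ] := by
    refine disjoint_left.2 fun x (hxβ : β < x) hx => ?_
    have hxα := mem_image_of_mem Subtype.val hx
    rw [IsEmbedding.subtypeVal.image_iteratedDerivedSet, Subtype.coe_image_univ, ← hKα] at hxα
    exact (Order.lt_add_one_iff.1 (iteratedDerivedSet_subset (Iio (β + 1)) _ hxα)).not_gt hxβ
  obtain ⟨δ, hδ, hTfin⟩ := hf.exists_finite_iteratedDerivedSet hK hft
    (by rwa [Ne, ← lift_zero.{0, 1}, lift_inj])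
    (hf.iteratedDerivedSet_range_eq IsEmbedding.subtypeVal hft
      (by rw [Subtype.range_coe, hKα]) hfin).ge
    ((Set.Ici_succ_eq_Ioi β ▸ isClosed_Ici).preimage continuous_subtype_val) hdisj
  obtain ⟨δ, rfl⟩ := mem_range_lift_of_le hδ.le
  refine infinite_iteratedDerivedSet_Iio_add_inter_Ioi (β := β) (lift_lt.1 hδ)
    ((opow_dvd_opow ω (lift_lt.1 hδ).le).mul_right _) ?_
  have hTfin' := hTfin.image Subtype.val
  rwa [IsEmbedding.subtypeVal.image_iteratedDerivedSet, Subtype.image_preimage_coe, hαβ]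
    at hTfin'

theorem not_biembed_mul_succ_general (γ m : Ordinal.{0}) (hγ : γ ≠ 0) (hmfin : m < ω) :
    ¬ HomeoCopy (ω ^ γ * (m + 1)) (Iio (ω ^ γ * m + 1)) ∧
      ¬ Biembed (ω ^ γ * (m + 1)) (ω ^ γ * m + 1) := by
  obtain ⟨n, rfl⟩ := lt_omega0.1 hmfin
  have h := not_homeoCopy_opow_mul_natCast_add_one hγ n
  exact ⟨h, fun hb => h hb.1⟩

/-- `ω^γ·(m+1)` is not homeomorphic to any subspace of `ω^γ·m + 1`; hence they are
not biembeddable. -/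
theorem not_biembed_mul_succ (γ m : Ordinal.{0}) (hγ : γ ≠ 0) (hm : m ≠ 0) (hmfin : m < ω) :
    ¬ HomeoCopy (ω ^ γ * (m + 1)) (Iio (ω ^ γ * m + 1)) ∧
      ¬ Biembed (ω ^ γ * (m + 1)) (ω ^ γ * m + 1) :=
  not_biembed_mul_succ_general γ m hγ hmfin

end
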